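/- arXiv:math/0303087 — 2 statements merged into one kernel-verified Lean document; each statement's English description precedes it below -/
import Mathlib

section
/- In SL₃(ℂ), with y₁(t) = I + tE₂₁, y₂(t) = I + tE₃₂, α₁^∨(t) = diag(t, t⁻¹, 1), α₂^∨(t) = diag(1, t, t⁻¹), the following identity holds for all nonzero c₁, c₂, c₃ ∈ ℂ with c₁c₃ + c₂ ≠ 0: y₁(1/c₁)α₁^∨(c₁)·y₂(1/c₂)α₂^∨(c₂)·y₁(1/c₃)α₁^∨(c₃) = y₂(c₁/(c₁c₃+c₂))α₂^∨((c₁c₃+c₂)/c₁)·y₁(1/(c₁c₃))α₁^∨(c₁c₃)·y₂((c₁c₃+c₂)/(c₁c₂))α₂^∨(c₁c₂/(c₁c₃+c₂)). -/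
open Matrix

noncomputable section

/-- `y₁(t) = I + t E₂₁` in `SL₃(ℂ)`. -/
def y₁ (t : ℂ) : Matrix (Fin 3) (Fin 3) ℂ := !![1, 0, 0; t, 1, 0; 0, 0, 1]

/-- `y₂(t) = I + t E₃₂` in `SL₃(ℂ)`. -/
def y₂ (t : ℂ) : Matrix (Fin 3) (Fin 3) ℂ := !![1, 0, 0; 0, 1, 0; 0, t, 1]

/-- The coroot torus `α₁^∨(t) = diag(t, t⁻¹, 1)`. -/
def h₁ (t : ℂ) : Matrix (Fin 3) (Fin 3) ℂ := !![t, 0, 0; 0, t⁻¹, 0; 0, 0, 1]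

/-- The coroot torus `α₂^∨(t) = diag(1, t, t⁻¹)`. -/
def h₂ (t : ℂ) : Matrix (Fin 3) (Fin 3) ℂ := !![1, 0, 0; 0, t, 0; 0, 0, t⁻¹]

set_option maxHeartbeats 4000000 in
/-- The tropical braid-type identity of type `A₂` in `SL₃(ℂ)`. -/
theorem tropical_braid_A2 (c₁ c₂ c₃ : ℂ) (h1 : c₁ ≠ 0) (h2 : c₂ ≠ 0) (h3 : c₃ ≠ 0)
    (h4 : c₁ * c₃ + c₂ ≠ 0) :
    y₁ (1 / c₁) * h₁ c₁ * (y₂ (1 / c₂) * h₂ c₂) * (y₁ (1 / c₃) * h₁ c₃) =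
      y₂ (c₁ / (c₁ * c₃ + c₂)) * h₂ ((c₁ * c₃ + c₂) / c₁) *
        (y₁ (1 / (c₁ * c₃)) * h₁ (c₁ * c₃)) *
        (y₂ ((c₁ * c₃ + c₂) / (c₁ * c₂)) * h₂ (c₁ * c₂ / (c₁ * c₃ + c₂))) := by
  simp only [y₁, y₂, h₁, h₂, Matrix.mul_fin_three]
  simp only [one_mul, mul_one, zero_mul, mul_zero, add_zero, zero_add, one_div]
  have h4' : c₃ * c₁ + c₂ ≠ 0 := by rwa [mul_comm]
  have h4'' : c₂ + c₃ * c₁ ≠ 0 := by rwa [add_comm, mul_comm]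
  ext i j
  fin_cases i <;> fin_cases j <;>
    simp only [Matrix.cons_val', Matrix.cons_val_zero, Matrix.cons_val_one, Matrix.head_cons,
      Matrix.empty_val', Matrix.cons_val_fin_one, Matrix.head_fin_const, Matrix.of_apply,
        Fin.zero_eta, Fin.mk_one, Fin.reduceFinMk, Matrix.cons_val] <;>
    field_simp <;> ring

end
end

section
/- For all real numbers z₁,...,z₆: max of the nine quantities {−2z₂+3z₃, −3z₁+z₂, 3z₅−z₄, −3z₃+2z₄, z₆, z₄−z₂, z₄−z₁−z₃, z₅−z₁, z₃+z₅−z₂} equals max of the five quantities {z₆, 3z₅−z₄, −3z₃+2z₄, −2z₂+3z₃, −3z₁+z₂}. -/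
/-- The `G₂` ultra-discretization identity: the maximum of the nine quantities
equals the maximum of the five quantities (the four extra terms are convex
combinations of the others). -/
theorem g2_max_identity (z₁ z₂ z₃ z₄ z₅ z₆ : ℝ) :
    max (-2 * z₂ + 3 * z₃) (max (-3 * z₁ + z₂) (max (3 * z₅ - z₄)
      (max (-3 * z₃ + 2 * z₄) (max z₆ (max (z₄ - z₂) (max (z₄ - z₁ - z₃)
        (max (z₅ - z₁) (z₃ + z₅ - z₂)))))))) =
    max z₆ (max (3 * z₅ - z₄) (max (-3 * z₃ + 2 * z₄)
      (max (-2 * z₂ + 3 * z₃) (-3 * z₁ + z₂)))) := by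
  apply le_antisymm
  · simp only [max_le_iff]
    refine ⟨?_, ?_, ?_, ?_, ?_, ?_, ?_, ?_, ?_⟩ <;> simp only [le_max_iff]
    · simp
    · simp
    · simp
    · simp
    · simp
    · rcases le_total (-2 * z₂ + 3 * z₃) (-3 * z₃ + 2 * z₄) with h | h
      · right; right; left; linarith
      · right; right; right; left; linarith
    · rcases le_total (-2 * z₂ + 3 * z₃) (-3 * z₁ + z₂) with h1 | h1 <;>
        rcases le_total (-2 * z₂ + 3 * z₃) (-3 * z₃ + 2 * z₄) with h2 | h2 <;>
        rcases le_total (-3 * z₁ + z₂) (-3 * z₃ + 2 * z₄) with h3 | h3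
      all_goals first
        | (right; right; left; linarith)
        | (right; right; right; left; linarith)
        | (right; right; right; right; linarith)
    · rcases le_total (-2 * z₂ + 3 * z₃) (-3 * z₁ + z₂) with h1 | h1 <;>
        rcases le_total (-2 * z₂ + 3 * z₃) (3 * z₅ - z₄) with h2 | h2 <;>
        rcases le_total (-2 * z₂ + 3 * z₃) (-3 * z₃ + 2 * z₄) with h3 | h3 <;>
        rcases le_total (-3 * z₁ + z₂) (3 * z₅ - z₄) with h4 | h4 <;>
        rcases le_total (-3 * z₁ + z₂) (-3 * z₃ + 2 * z₄) with h5 | h5 <;>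
        rcases le_total (3 * z₅ - z₄) (-3 * z₃ + 2 * z₄) with h6 | h6
      all_goals first
        | (right; left; linarith)
        | (right; right; left; linarith)
        | (right; right; right; left; linarith)
        | (right; right; right; right; linarith)
    · rcases le_total (-2 * z₂ + 3 * z₃) (3 * z₅ - z₄) with h2 | h2 <;>
        rcases le_total (-2 * z₂ + 3 * z₃) (-3 * z₃ + 2 * z₄) with h3 | h3 <;>
        rcases le_total (3 * z₅ - z₄) (-3 * z₃ + 2 * z₄) with h6 | h6
      all_goals first
        | (right; left; linarith)
        | (right; right; left; linarith)
        | (right; right; right; left; linarith)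
  · simp only [max_le_iff]
    refine ⟨?_, ?_, ?_, ?_, ?_⟩ <;> simp only [le_max_iff] <;> simp
end
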